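/- arXiv:2603.28462 — 8 statements merged into one kernel-verified Lean document; each statement's English description precedes it below -/
import Mathlib

section
/- Let τ0, τ1, α, β be real numbers with 0 < τ0, τ1 < 1, 0 ≤ α < 1, 0 ≤ β < 1, and τ0 ≠ τ1. Define μ_{0z} = τ_z(1−α) and μ_{1z} = β + τ_z(1−β) for z ∈ {0,1}. Then for each z ∈ {0,1}, τ_z = μ_{0z}(μ_{11} − μ_{10}) / [μ_{01}(1−μ_{10}) − μ_{00}(1−μ_{11})]. -/
/-- Closed-form identification of the desert decision rule (Theorem 1):
`τ_z = μ_{0z}(μ_{11} − μ_{10}) / [μ_{01}(1−μ_{10}) − μ_{00}(1−μ_{11})]` for `z ∈ {0,1}`. -/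
theorem desert_rule_identification
    (τ0 τ1 α β : ℝ)
    (hτ0 : 0 < τ0) (hτ0' : τ0 < 1) (hτ1 : 0 < τ1) (hτ1' : τ1 < 1)
    (hα : 0 ≤ α) (hα' : α < 1) (hβ : 0 ≤ β) (hβ' : β < 1)
    (hne : τ0 ≠ τ1)
    (μ00 μ01 μ10 μ11 : ℝ)
    (hμ00 : μ00 = τ0 * (1 - α)) (hμ01 : μ01 = τ1 * (1 - α))
    (hμ10 : μ10 = β + τ0 * (1 - β)) (hμ11 : μ11 = β + τ1 * (1 - β)) :
    τ0 = μ00 * (μ11 - μ10) / (μ01 * (1 - μ10) - μ00 * (1 - μ11)) ∧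
    τ1 = μ01 * (μ11 - μ10) / (μ01 * (1 - μ10) - μ00 * (1 - μ11)) := by
  subst hμ00 hμ01 hμ10 hμ11
  have ha : (1 - α) ≠ 0 := by linarith
  have hb : (1 - β) ≠ 0 := by linarith
  have ht : τ1 - τ0 ≠ 0 := sub_ne_zero.mpr (Ne.symm hne)
  have hD : τ1 * (1 - α) * (1 - (β + τ0 * (1 - β))) -
      τ0 * (1 - α) * (1 - (β + τ1 * (1 - β))) = (1 - α) * (1 - β) * (τ1 - τ0) := by
    ring
  constructor <;> rw [hD] <;> field_simp <;> ring
end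

section
/- Let τ0, τ1, α, β and τ0', τ1', α', β' be real numbers, all lying in the open interval (0,1) for the τ's and in [0,1) for α, β, α', β', with τ0 ≠ τ1 and τ0' ≠ τ1'. Suppose τ_z(1−α) = τ_z'(1−α') and β + τ_z(1−β) = β' + τ_z'(1−β') for both z = 0 and z = 1. Then τ0 = τ0', τ1 = τ1', α = α', and β = β'. -/
/-- Uniqueness of the solution to the four-equation system: the observed
probabilities determine `(τ0, τ1, α, β)` uniquely under the relevance condition. -/
theorem identification_uniqueness
    (τ0 τ1 α β τ0' τ1' α' β' : ℝ)
    (hτ0 : 0 < τ0) (hτ0a : τ0 < 1) (hτ1 : 0 < τ1) (hτ1a : τ1 < 1)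
    (hτ0' : 0 < τ0') (hτ0'a : τ0' < 1) (hτ1' : 0 < τ1') (hτ1'a : τ1' < 1)
    (hα : 0 ≤ α) (hαa : α < 1) (hβ : 0 ≤ β) (hβa : β < 1)
    (hα' : 0 ≤ α') (hα'a : α' < 1) (hβ' : 0 ≤ β') (hβ'a : β' < 1)
    (hne : τ0 ≠ τ1) (hne' : τ0' ≠ τ1')
    (h00 : τ0 * (1 - α) = τ0' * (1 - α'))
    (h01 : τ1 * (1 - α) = τ1' * (1 - α'))
    (h10 : β + τ0 * (1 - β) = β' + τ0' * (1 - β'))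
    (h11 : β + τ1 * (1 - β) = β' + τ1' * (1 - β')) :
    τ0 = τ0' ∧ τ1 = τ1' ∧ α = α' ∧ β = β' := by
  have hd : τ0 - τ1 ≠ 0 := sub_ne_zero.mpr hne
  have hA : (1 - α) ≠ 0 := by linarith [hαa]
  have hB : (1 - β) ≠ 0 := by linarith [hβa]
  have e1 : (τ0 - τ1) * (1 - α) = (τ0' - τ1') * (1 - α') := by
    linear_combination h00 - h01
  have e2 : (τ0 - τ1) * (1 - β) = (τ0' - τ1') * (1 - β') := by
    linear_combination h10 - h11
  have f0 : (1 - τ0) * (1 - β) = (1 - τ0') * (1 - β') := by linear_combination -h10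
  have g1 : τ0 * (τ0' - τ1') = τ0' * (τ0 - τ1) :=
    mul_right_cancel₀ hA (by linear_combination (τ0' - τ1') * h00 - τ0' * e1)
  have g2 : (1 - τ0) * (τ0' - τ1') = (1 - τ0') * (τ0 - τ1) :=
    mul_right_cancel₀ hB (by linear_combination (τ0' - τ1') * f0 - (1 - τ0') * e2)
  have hd' : τ0' - τ1' = τ0 - τ1 := by linear_combination g1 + g2
  have ht0 : τ0 = τ0' := mul_right_cancel₀ hd (by linear_combination g1 - τ0 * hd')
  have ht1 : τ1 = τ1' := by linear_combination ht0 + hd'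
  have hαeq : 1 - α = 1 - α' :=
    mul_left_cancel₀ (ne_of_gt hτ0) (by linear_combination h00 - (1 - α') * ht0)
  have h1τ0 : (1 : ℝ) - τ0 ≠ 0 := by linarith [hτ0a]
  have hβeq : 1 - β = 1 - β' :=
    mul_left_cancel₀ h1τ0 (by linear_combination f0 + (1 - β') * ht0)
  exact ⟨ht0, ht1, by linarith, by linarith⟩
end

section
/- Let τ0, τ1, α, β be real numbers with 0 < τ0, τ1 < 1, 0 ≤ α < 1, 0 ≤ β < 1. Define μ_{0z} = τ_z(1−α) and μ_{1z} = β + τ_z(1−β) for z ∈ {0,1}. Then: (i) μ_{1z} ≥ μ_{0z} for z ∈ {0,1}; (ii) if τ0 ≠ τ1 then μ_{s1} ≠ μ_{s0} for s ∈ {0,1}; and (iii) (μ_{11} − μ_{10}) and (μ_{01} − μ_{00}) have the same sign (their product is positive when τ0 ≠ τ1). -/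
/-- Testable implications (Proposition 3): (i) `μ_{1z} ≥ μ_{0z}`;
(ii) under relevance `μ_{s1} ≠ μ_{s0}`; (iii) `(μ_{11}−μ_{10})(μ_{01}−μ_{00}) > 0`. -/
theorem testable_implications
    (τ0 τ1 α β : ℝ)
    (hτ0 : 0 < τ0) (hτ0' : τ0 < 1) (hτ1 : 0 < τ1) (hτ1' : τ1 < 1)
    (hα : 0 ≤ α) (hα' : α < 1) (hβ : 0 ≤ β) (hβ' : β < 1)
    (μ00 μ01 μ10 μ11 : ℝ)
    (hμ00 : μ00 = τ0 * (1 - α)) (hμ01 : μ01 = τ1 * (1 - α))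
    (hμ10 : μ10 = β + τ0 * (1 - β)) (hμ11 : μ11 = β + τ1 * (1 - β)) :
    (μ10 ≥ μ00 ∧ μ11 ≥ μ01) ∧
    (τ0 ≠ τ1 → (μ01 ≠ μ00 ∧ μ11 ≠ μ10)) ∧
    (τ0 ≠ τ1 → (μ11 - μ10) * (μ01 - μ00) > 0) := by
  subst hμ00 hμ01 hμ10 hμ11
  refine ⟨⟨by nlinarith, by nlinarith⟩, fun h => ⟨?_, ?_⟩, fun h => ?_⟩
  · intro he
    apply h
    have : (τ1 - τ0) * (1 - α) = 0 := by linarith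
    rcases mul_eq_zero.1 this with h1 | h1 <;> linarith
  · intro he
    apply h
    have : (τ1 - τ0) * (1 - β) = 0 := by linarith
    rcases mul_eq_zero.1 this with h1 | h1 <;> linarith
  · have hne : τ1 - τ0 ≠ 0 := sub_ne_zero.2 (Ne.symm h)
    nlinarith [sq_pos_of_ne_zero hne, mul_pos (sub_pos.2 hβ') (sub_pos.2 hα'), sq_nonneg (τ1 - τ0)]
end

section
/- Let Y* be a {0,1}-valued random variable, S and V random variables on a common probability space with Y* conditionally independent of S given V. Let τ(V) = P(Y*=1 | V). Then Y* is conditionally independent of S given τ(V); that is, P(Y*=1 | S, τ(V)) = P(Y*=1 | τ(V)) almost surely. -/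
/-!
By conditional independence, conditioning `Y*` on `(S, V)` already gives `τ ∘ V`, and so does
conditioning on `V`. The σ-algebras generated by `(S, τ ∘ V)` and by `τ ∘ V` are coarser than
those of `(S, V)` and of `V` respectively, yet still make `τ ∘ V` measurable; by the tower
property both conditional expectations in the claim therefore equal `τ ∘ V`.
-/

open MeasureTheory ProbabilityTheory

theorem MeasurableSpace.comap_comp_le_comap {Ω α β : Type*} [MeasurableSpace α]
    [MeasurableSpace β] (f : Ω → α) {g : α → β} (hg : Measurable g) :
    MeasurableSpace.comap (g ∘ f) inferInstance ≤ MeasurableSpace.comap f inferInstance := by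
  rw [← MeasurableSpace.comap_comp]
  exact MeasurableSpace.comap_mono hg.comap_le

theorem condExp_ae_eq_of_condExp_ae_eq_of_le {α E : Type*} [NormedAddCommGroup E]
    [NormedSpace ℝ E] [CompleteSpace E] {m₁ m₂ m₀ : MeasurableSpace α} {μ : Measure α}
    {f g : α → E} (hm₁₂ : m₁ ≤ m₂) (hm₂ : m₂ ≤ m₀) [SigmaFinite (μ.trim (hm₁₂.trans hm₂))]
    (hg : StronglyMeasurable[m₁] g) (hfg : μ[f | m₂] =ᵐ[μ] g) :
    μ[f | m₁] =ᵐ[μ] g := by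
  have : SigmaFinite (μ.trim hm₂) := sigmaFiniteTrim_mono hm₂ hm₁₂
  calc μ[f | m₁] =ᵐ[μ] μ[μ[f | m₂] | m₁] := (condExp_condExp_of_le hm₁₂ hm₂).symm
    _ =ᵐ[μ] μ[g | m₁] := condExp_congr_ae hfg
    _ = g := condExp_of_stronglyMeasurable _ hg (integrable_condExp.congr hfg)

theorem desert_rule_calibration_general
    {Ω γ δ : Type*} [MeasurableSpace Ω] [MeasurableSpace γ] [MeasurableSpace δ]
    (P : Measure Ω) [IsProbabilityMeasure P]
    (Ystar : Ω → ℝ) (V : Ω → γ) (S : Ω → δ)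
    (hmV : Measurable V) (hmS : Measurable S)
    (hCI : P[Ystar | MeasurableSpace.comap (fun ω => (S ω, V ω)) inferInstance]
        =ᵐ[P] P[Ystar | MeasurableSpace.comap V inferInstance])
    (τ : γ → ℝ) (hmτ : Measurable τ)
    (hτ : P[Ystar | MeasurableSpace.comap V inferInstance]
        =ᵐ[P] fun ω => τ (V ω)) :
    P[Ystar | MeasurableSpace.comap (fun ω => (S ω, τ (V ω))) inferInstance]
      =ᵐ[P] P[Ystar | MeasurableSpace.comap (fun ω => τ (V ω)) inferInstance] := by
  have hSτV : MeasurableSpace.comap (fun ω => (S ω, τ (V ω))) inferInstance ≤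
      MeasurableSpace.comap (fun ω => (S ω, V ω)) inferInstance :=
    MeasurableSpace.comap_comp_le_comap (fun ω => (S ω, V ω)) (measurable_id.prodMap hmτ)
  have hτV : MeasurableSpace.comap (fun ω => τ (V ω)) inferInstance ≤
      MeasurableSpace.comap V inferInstance :=
    MeasurableSpace.comap_comp_le_comap V hmτ
  have hSτV_meas : Measurable[MeasurableSpace.comap (fun ω => (S ω, τ (V ω))) inferInstance]
      (fun ω => τ (V ω)) := measurable_snd.comp (comap_measurable _)
  have h_fine := condExp_ae_eq_of_condExp_ae_eq_of_le hSτV (hmS.prodMk hmV).comap_le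
    hSτV_meas.stronglyMeasurable (hCI.trans hτ)
  have h_coarse := condExp_ae_eq_of_condExp_ae_eq_of_le hτV hmV.comap_le
    (comap_measurable _).stronglyMeasurable hτ
  exact h_fine.trans h_coarse.symm

/-- Proposition 1(ii): calibration of the desert decision rule. If
`E[Y* | S, V] = E[Y* | V]` a.s. (conditional independence of the binary `Y*`
and `S` given `V`) and `τ` is a version of `P(Y* = 1 | V)`, then
`P(Y* = 1 | S, τ(V)) = P(Y* = 1 | τ(V))` a.s. -/
theorem desert_rule_calibration
    {Ω γ δ : Type*} [MeasurableSpace Ω] [MeasurableSpace γ] [MeasurableSpace δ]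
    (P : Measure Ω) [IsProbabilityMeasure P]
    (Ystar : Ω → ℝ) (V : Ω → γ) (S : Ω → δ)
    (hYstar01 : ∀ ω, Ystar ω = 0 ∨ Ystar ω = 1)
    (hmYstar : Measurable Ystar) (hmV : Measurable V) (hmS : Measurable S)
    (hCI : P[Ystar | MeasurableSpace.comap (fun ω => (S ω, V ω)) inferInstance]
        =ᵐ[P] P[Ystar | MeasurableSpace.comap V inferInstance])
    (τ : γ → ℝ) (hmτ : Measurable τ)
    (hτ : P[Ystar | MeasurableSpace.comap V inferInstance]
        =ᵐ[P] fun ω => τ (V ω)) :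
    P[Ystar | MeasurableSpace.comap (fun ω => (S ω, τ (V ω))) inferInstance]
      =ᵐ[P] P[Ystar | MeasurableSpace.comap (fun ω => τ (V ω)) inferInstance] :=
  desert_rule_calibration_general P Ystar V S hmV hmS hCI τ hmτ hτ
end

section
/- Let τ00, τ01, α, β, κ0, κ1 be real numbers with 0 < τ0z and τ0z + κz < 1 for z ∈ {0,1}, 0 ≤ α < 1, 0 ≤ β < 1, and τ01(1−κ0) ≠ τ00(1−κ1). Define τ1z = τ0z + κz, μ_{0z} = τ0z(1−α), and μ_{1z} = β + τ1z(1−β) for z ∈ {0,1}. Then for each z ∈ {0,1}, τ0z = [μ_{0z}(μ_{11} − μ_{10}) + κ0 μ_{0z}(1−μ_{11}) − κ1 μ_{0z}(1−μ_{10})] / [μ_{01}(1−μ_{10}) − μ_{00}(1−μ_{11})]. -/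
/-- Theorem 5: identification of the desert decision rule with legitimate
differential treatment `κ_z = τ_{1z} − τ_{0z}`. -/
theorem identification_with_legitimate_treatment
    (τ00 τ01 α β κ0 κ1 : ℝ)
    (hτ00 : 0 < τ00) (hτ01 : 0 < τ01)
    (hτ10 : τ00 + κ0 < 1) (hτ11 : τ01 + κ1 < 1)
    (hα : 0 ≤ α) (hα' : α < 1) (hβ : 0 ≤ β) (hβ' : β < 1)
    (hrel : τ01 * (1 - κ0) ≠ τ00 * (1 - κ1))
    (τ10 τ11 μ00 μ01 μ10 μ11 : ℝ)
    (hτ10def : τ10 = τ00 + κ0) (hτ11def : τ11 = τ01 + κ1)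
    (hμ00 : μ00 = τ00 * (1 - α)) (hμ01 : μ01 = τ01 * (1 - α))
    (hμ10 : μ10 = β + τ10 * (1 - β)) (hμ11 : μ11 = β + τ11 * (1 - β)) :
    τ00 = (μ00 * (μ11 - μ10) + κ0 * μ00 * (1 - μ11) - κ1 * μ00 * (1 - μ10)) /
            (μ01 * (1 - μ10) - μ00 * (1 - μ11)) ∧
    τ01 = (μ01 * (μ11 - μ10) + κ0 * μ01 * (1 - μ11) - κ1 * μ01 * (1 - μ10)) /
            (μ01 * (1 - μ10) - μ00 * (1 - μ11)) := by
  subst hτ10def hτ11def hμ00 hμ01 hμ10 hμ11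
  have hden : τ01 * (1 - α) * (1 - (β + (τ00 + κ0) * (1 - β))) -
      τ00 * (1 - α) * (1 - (β + (τ01 + κ1) * (1 - β))) ≠ 0 := by
    have h : τ01 * (1 - α) * (1 - (β + (τ00 + κ0) * (1 - β))) -
        τ00 * (1 - α) * (1 - (β + (τ01 + κ1) * (1 - β))) =
        (1 - α) * (1 - β) * (τ01 * (1 - κ0) - τ00 * (1 - κ1)) := by ring
    rw [h]
    have h1 : (1 - α) ≠ 0 := by linarith
    have h2 : (1 - β) ≠ 0 := by linarith
    have h3 : τ01 * (1 - κ0) - τ00 * (1 - κ1) ≠ 0 := sub_ne_zero.mpr hrel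
    positivity
  constructor <;> rw [eq_div_iff hden] <;> ring
end

section
/- Let τ0, τ1, α, β, δ0, δ1 be real numbers with 0 < τ0, τ1 < 1, τ0 ≠ τ1, 0 ≤ α, β, δ0, δ1, α + δ0 < 1, and β + δ1 < 1. Define μ_{0z} = δ0 + τ_z(1 − δ0 − α) and μ_{1z} = β + τ_z(1 − δ1 − β) for z ∈ {0,1}. Then for each z ∈ {0,1}, τ_z = (μ_{0z} − δ0)(μ_{11} − μ_{10}) / [μ_{01}(1−μ_{10}) − μ_{00}(1−μ_{11}) − δ0(μ_{11}−μ_{10}) − δ1(μ_{01}−μ_{00})]. -/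
/-- Proposition 4: sensitivity-analysis identification formula under violation
of the one-sided unfairness mechanism, with sensitivity parameters `δ0, δ1`. -/
theorem identification_sensitivity_unfairness
    (τ0 τ1 α β δ0 δ1 : ℝ)
    (hτ0 : 0 < τ0) (hτ0' : τ0 < 1) (hτ1 : 0 < τ1) (hτ1' : τ1 < 1)
    (hne : τ0 ≠ τ1)
    (hα : 0 ≤ α) (hβ : 0 ≤ β) (hδ0 : 0 ≤ δ0) (hδ1 : 0 ≤ δ1)
    (hαδ : α + δ0 < 1) (hβδ : β + δ1 < 1)
    (μ00 μ01 μ10 μ11 : ℝ)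
    (hμ00 : μ00 = δ0 + τ0 * (1 - δ0 - α)) (hμ01 : μ01 = δ0 + τ1 * (1 - δ0 - α))
    (hμ10 : μ10 = β + τ0 * (1 - δ1 - β)) (hμ11 : μ11 = β + τ1 * (1 - δ1 - β)) :
    τ0 = (μ00 - δ0) * (μ11 - μ10) /
          (μ01 * (1 - μ10) - μ00 * (1 - μ11) - δ0 * (μ11 - μ10) - δ1 * (μ01 - μ00)) ∧
    τ1 = (μ01 - δ0) * (μ11 - μ10) /
          (μ01 * (1 - μ10) - μ00 * (1 - μ11) - δ0 * (μ11 - μ10) - δ1 * (μ01 - μ00)) := by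
  subst hμ00 hμ01 hμ10 hμ11
  have hA : (0:ℝ) < 1 - δ0 - α := by linarith
  have hB : (0:ℝ) < 1 - δ1 - β := by linarith
  have hD : (δ0 + τ1 * (1 - δ0 - α)) * (1 - (β + τ0 * (1 - δ1 - β))) -
      (δ0 + τ0 * (1 - δ0 - α)) * (1 - (β + τ1 * (1 - δ1 - β))) -
      δ0 * ((β + τ1 * (1 - δ1 - β)) - (β + τ0 * (1 - δ1 - β))) -
      δ1 * ((δ0 + τ1 * (1 - δ0 - α)) - (δ0 + τ0 * (1 - δ0 - α))) =
      (τ1 - τ0) * (1 - δ0 - α) * (1 - δ1 - β) := by ring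
  rw [hD]
  have hne' : τ1 - τ0 ≠ 0 := sub_ne_zero.mpr (Ne.symm hne)
  constructor <;> field_simp <;> ring
end

section
/- Let τ0, τ1, α0, α1, β0, β1 be real numbers with 0 < τ0, τ1 < 1, τ0 ≠ τ1, and 0 ≤ α_z, β_z < 1 for z ∈ {0,1}. Set ζ0 = (1−α1)/(1−α0) − 1 and ζ1 = (1−β1)/(1−β0) − 1. Define μ_{0z} = (1+ζ0)^z · τ_z(1−α0) and μ_{1z} = 1 − (1+ζ1)^z · (1−τ_z)(1−β0) for z ∈ {0,1}. Then for each z ∈ {0,1}, τ_z = (1+ζ0)^{1−z} μ_{0z} [μ_{11} − μ_{10} + ζ1(1−μ_{10})] / [(1+ζ1)μ_{01}(1−μ_{10}) − (1+ζ0)μ_{00}(1−μ_{11})]. -/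
/-- Proposition 5: sensitivity-analysis identification formula under violation
of non-differentiality of the auxiliary variable, with sensitivity parameters
`ζ0 = (1−α1)/(1−α0) − 1` and `ζ1 = (1−β1)/(1−β0) − 1`. -/
theorem identification_sensitivity_nondifferentiality
    (τ0 τ1 α0 α1 β0 β1 : ℝ)
    (hτ0 : 0 < τ0) (hτ0' : τ0 < 1) (hτ1 : 0 < τ1) (hτ1' : τ1 < 1)
    (hne : τ0 ≠ τ1)
    (hα0 : 0 ≤ α0) (hα0' : α0 < 1) (hα1 : 0 ≤ α1) (hα1' : α1 < 1)
    (hβ0 : 0 ≤ β0) (hβ0' : β0 < 1) (hβ1 : 0 ≤ β1) (hβ1' : β1 < 1)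
    (ζ0 ζ1 : ℝ)
    (hζ0 : ζ0 = (1 - α1) / (1 - α0) - 1) (hζ1 : ζ1 = (1 - β1) / (1 - β0) - 1)
    (μ00 μ01 μ10 μ11 : ℝ)
    (hμ00 : μ00 = (1 + ζ0) ^ (0 : ℕ) * (τ0 * (1 - α0)))
    (hμ01 : μ01 = (1 + ζ0) ^ (1 : ℕ) * (τ1 * (1 - α0)))
    (hμ10 : μ10 = 1 - (1 + ζ1) ^ (0 : ℕ) * ((1 - τ0) * (1 - β0)))
    (hμ11 : μ11 = 1 - (1 + ζ1) ^ (1 : ℕ) * ((1 - τ1) * (1 - β0))) :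
    τ0 = (1 + ζ0) ^ (1 : ℕ) * μ00 * (μ11 - μ10 + ζ1 * (1 - μ10)) /
          ((1 + ζ1) * μ01 * (1 - μ10) - (1 + ζ0) * μ00 * (1 - μ11)) ∧
    τ1 = (1 + ζ0) ^ (0 : ℕ) * μ01 * (μ11 - μ10 + ζ1 * (1 - μ10)) /
          ((1 + ζ1) * μ01 * (1 - μ10) - (1 + ζ0) * μ00 * (1 - μ11)) := by
  have ha0 : (1 - α0) ≠ 0 := by linarith
  have ha1 : (1 - α1) ≠ 0 := by linarith
  have hb0 : (1 - β0) ≠ 0 := by linarith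
  have hb1 : (1 - β1) ≠ 0 := by linarith
  have hz0 : 1 + ζ0 = (1 - α1) / (1 - α0) := by rw [hζ0]; ring
  have hz1 : 1 + ζ1 = (1 - β1) / (1 - β0) := by rw [hζ1]; ring
  have hm01 : μ01 = τ1 * (1 - α1) := by
    rw [hμ01, hz0]; field_simp
  have hm00 : μ00 = τ0 * (1 - α0) := by rw [hμ00]; ring
  have hm10 : μ10 = 1 - (1 - τ0) * (1 - β0) := by rw [hμ10]; ring
  have hm11 : μ11 = 1 - (1 - τ1) * (1 - β1) := by
    rw [hμ11, hz1]; field_simp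
  have hD : (1 + ζ1) * μ01 * (1 - μ10) - (1 + ζ0) * μ00 * (1 - μ11)
      = (1 - α1) * (1 - β1) * (τ1 - τ0) := by
    rw [hz0, hz1, hm00, hm01, hm10, hm11]
    field_simp
    ring
  have hDne : (1 + ζ1) * μ01 * (1 - μ10) - (1 + ζ0) * μ00 * (1 - μ11) ≠ 0 := by
    rw [hD]
    have h2 : τ1 - τ0 ≠ 0 := sub_ne_zero.mpr (Ne.symm hne)
    exact mul_ne_zero (mul_ne_zero ha1 hb1) h2
  have hN : μ11 - μ10 + ζ1 * (1 - μ10) = (1 - β1) * (τ1 - τ0) := by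
    rw [hζ1, hm10, hm11]
    field_simp
    ring
  constructor
  · rw [eq_div_iff hDne, hD, hN, hz0, hm00]
    field_simp
  · rw [eq_div_iff hDne, hD, hN, hm01]
    field_simp
end

section
/- Let τ0, τ1, α, β, δ0, δ1 be real numbers with 0 < τ0, τ1 < 1, τ0 ≠ τ1, 0 ≤ α, β, δ0, δ1, α + δ0 < 1, and β + δ1 < 1. Define μ_{0z} = δ0 + τ_z(1 − δ0 − α) and μ_{1z} = β + τ_z(1 − δ1 − β) for z ∈ {0,1}, and let T_z = μ_{0z}(μ_{11} − μ_{10}) / [μ_{01}(1−μ_{10}) − μ_{00}(1−μ_{11})] be the naive identification formula. Then T_z − τ_z = δ0(1−τ_z)/(1−α) − δ1 τ_z/(1−β) + R, where the remainder R vanishes when δ0 = δ1 = 0 and satisfies |R| ≤ C(δ0² + δ1² + δ0 δ1) for some constant C depending only on lower bounds on |τ1−τ0|, 1−α−δ0, and 1−β−δ1. -/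
/-- Bias of the naive formula `T_z` under violation of one-sided unfairness:
`T_z − τ_z = δ0(1−τ_z)/(1−α) − δ1 τ_z/(1−β) + R` with `|R| ≤ C(δ0² + δ1² + δ0δ1)`,
where `C` depends only on the lower bound `c` on `|τ1−τ0|`, `1−α−δ0`, `1−β−δ1`. -/
theorem bias_of_naive_formula :
    ∀ c : ℝ, 0 < c → ∃ C : ℝ, 0 < C ∧
      ∀ τ0 τ1 α β δ0 δ1 : ℝ,
        0 < τ0 → τ0 < 1 → 0 < τ1 → τ1 < 1 → τ0 ≠ τ1 →
        0 ≤ α → 0 ≤ β → 0 ≤ δ0 → 0 ≤ δ1 → α + δ0 < 1 → β + δ1 < 1 →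
        c ≤ |τ1 - τ0| → c ≤ 1 - α - δ0 → c ≤ 1 - β - δ1 →
        ∀ μ00 μ01 μ10 μ11 : ℝ,
          μ00 = δ0 + τ0 * (1 - δ0 - α) → μ01 = δ0 + τ1 * (1 - δ0 - α) →
          μ10 = β + τ0 * (1 - δ1 - β) → μ11 = β + τ1 * (1 - δ1 - β) →
          ∀ z : Fin 2,
            ∃ R : ℝ,
              (μ00 * (1 - z.val) + μ01 * z.val) * (μ11 - μ10) /
                  (μ01 * (1 - μ10) - μ00 * (1 - μ11)) -
                  (τ0 * (1 - z.val) + τ1 * z.val) =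
                δ0 * (1 - (τ0 * (1 - z.val) + τ1 * z.val)) / (1 - α) -
                  δ1 * (τ0 * (1 - z.val) + τ1 * z.val) / (1 - β) + R ∧
              (δ0 = 0 → δ1 = 0 → R = 0) ∧
              |R| ≤ C * (δ0 ^ 2 + δ1 ^ 2 + δ0 * δ1) := by
  intro c hc
  refine ⟨1 / c ^ 4, by positivity, ?_⟩
  intro τ0 τ1 α β δ0 δ1 hτ00 hτ01 hτ10 hτ11 hne hα hβ hδ0 hδ1 hαδ hβδ hc1 hc2 hc3
  intro μ00 μ01 μ10 μ11 h00 h01 h10 h11 z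
  subst h00 h01 h10 h11
  have hu : (0:ℝ) < 1 - α := by linarith
  have hv : (0:ℝ) < 1 - β := by linarith
  have hapos : (0:ℝ) < 1 - α - δ0 := lt_of_lt_of_le hc hc2
  have hbpos : (0:ℝ) < 1 - β - δ1 := lt_of_lt_of_le hc hc3
  have hE : c ^ 2 ≤ (1 - α) * (1 - β) - δ0 * δ1 := by nlinarith
  have hEpos : (0:ℝ) < (1 - α) * (1 - β) - δ0 * δ1 := lt_of_lt_of_le (by positivity) hE
  have hτne : τ1 - τ0 ≠ 0 := sub_ne_zero.2 (Ne.symm hne)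
  have main : ∀ τ : ℝ, 0 ≤ τ → τ ≤ 1 →
      ∃ R : ℝ,
        (δ0 + τ * (1 - δ0 - α)) * ((β + τ1 * (1 - δ1 - β)) - (β + τ0 * (1 - δ1 - β))) /
            ((δ0 + τ1 * (1 - δ0 - α)) * (1 - (β + τ0 * (1 - δ1 - β))) -
              (δ0 + τ0 * (1 - δ0 - α)) * (1 - (β + τ1 * (1 - δ1 - β)))) - τ =
          δ0 * (1 - τ) / (1 - α) - δ1 * τ / (1 - β) + R ∧
        (δ0 = 0 → δ1 = 0 → R = 0) ∧
        |R| ≤ 1 / c ^ 4 * (δ0 ^ 2 + δ1 ^ 2 + δ0 * δ1) := by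
    intro τ hτ0 hτ1
    refine ⟨δ0 * δ1 * (τ * (1 - α) * (1 - β - δ1) - (1 - τ) * (1 - β) * (1 - α - δ0)) /
        (((1 - α) * (1 - β) - δ0 * δ1) * (1 - α) * (1 - β)), ?_, ?_, ?_⟩
    · have hD : (δ0 + τ1 * (1 - δ0 - α)) * (1 - (β + τ0 * (1 - δ1 - β))) -
          (δ0 + τ0 * (1 - δ0 - α)) * (1 - (β + τ1 * (1 - δ1 - β))) =
          (τ1 - τ0) * ((1 - α) * (1 - β) - δ0 * δ1) := by ring
      rw [hD]
      field_simp
      ring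
    · intro h0 _; simp [h0]
    · have ha1 : 1 - α - δ0 ≤ 1 := by linarith
      have hb1 : 1 - β - δ1 ≤ 1 := by linarith
      have hu1 : 1 - α ≤ 1 := by linarith
      have hv1 : 1 - β ≤ 1 := by linarith
      have t1 : τ * (1 - α) * (1 - β - δ1) ≤ 1 :=
        mul_le_one₀ (mul_le_one₀ hτ1 hu.le hu1) hbpos.le hb1
      have t2 : (0:ℝ) ≤ τ * (1 - α) * (1 - β - δ1) := by positivity
      have t3 : (1 - τ) * (1 - β) * (1 - α - δ0) ≤ 1 :=
        mul_le_one₀ (mul_le_one₀ (by linarith) hv.le hv1) hapos.le ha1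
      have t4 : (0:ℝ) ≤ (1 - τ) * (1 - β) * (1 - α - δ0) :=
        mul_nonneg (mul_nonneg (by linarith) hv.le) hapos.le
      have hbr : |τ * (1 - α) * (1 - β - δ1) - (1 - τ) * (1 - β) * (1 - α - δ0)| ≤ 1 := by
        rw [abs_le]; constructor <;> linarith
      have hcu : c ≤ 1 - α := by linarith
      have hcv : c ≤ 1 - β := by linarith
      have hden : c ^ 4 ≤ ((1 - α) * (1 - β) - δ0 * δ1) * (1 - α) * (1 - β) := by
        calc c ^ 4 = c ^ 2 * c * c := by ring
          _ ≤ ((1 - α) * (1 - β) - δ0 * δ1) * (1 - α) * (1 - β) :=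
            mul_le_mul (mul_le_mul hE hcu hc.le hEpos.le) hcv hc.le
              (by positivity)
      have hdenpos : (0:ℝ) < ((1 - α) * (1 - β) - δ0 * δ1) * (1 - α) * (1 - β) := by
        positivity
      rw [abs_div, abs_mul, abs_mul, abs_of_nonneg hδ0, abs_of_nonneg hδ1,
        abs_of_pos hdenpos]
      have h1 : δ0 * δ1 * |τ * (1 - α) * (1 - β - δ1) - (1 - τ) * (1 - β) * (1 - α - δ0)|
          ≤ δ0 * δ1 := mul_le_of_le_one_right (by positivity) hbr
      have h2 : δ0 * δ1 * |τ * (1 - α) * (1 - β - δ1) - (1 - τ) * (1 - β) * (1 - α - δ0)| /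
          (((1 - α) * (1 - β) - δ0 * δ1) * (1 - α) * (1 - β)) ≤ δ0 * δ1 / c ^ 4 :=
        div_le_div₀ (by positivity) h1 (by positivity) hden
      calc _ ≤ δ0 * δ1 / c ^ 4 := h2
        _ ≤ 1 / c ^ 4 * (δ0 ^ 2 + δ1 ^ 2 + δ0 * δ1) := by
            rw [div_eq_mul_inv, one_div, mul_comm (δ0 * δ1)]
            exact mul_le_mul_of_nonneg_left (by nlinarith) (by positivity)
  have ht0 : (0:ℝ) ≤ (z.val : ℝ) := by positivity
  have ht1 : ((z.val : ℝ)) ≤ 1 := by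
    have : z.val ≤ 1 := by omega
    exact_mod_cast this
  set t : ℝ := (z.val : ℝ) with htdef
  have hτl : 0 ≤ τ0 * (1 - t) + τ1 * t := by nlinarith
  have hτu : τ0 * (1 - t) + τ1 * t ≤ 1 := by nlinarith
  obtain ⟨R, h1, h2, h3⟩ := main (τ0 * (1 - t) + τ1 * t) hτl hτu
  refine ⟨R, ?_, h2, h3⟩
  have hμ : (δ0 + τ0 * (1 - δ0 - α)) * (1 - t) + (δ0 + τ1 * (1 - δ0 - α)) * t =
      δ0 + (τ0 * (1 - t) + τ1 * t) * (1 - δ0 - α) := by ring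
  rw [hμ]
  exact h1
end
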